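/- Let E := log(1+√2). For every real x > 0, sinh(x) · (E/x)^{x/tanh(x)} ≤ 1 (the exponent x/tanh(x) being a real power of the positive base E/x), and equality holds at x = E. -/

import Mathlib

noncomputable def groundE : ℝ := Real.log (1 + Real.sqrt 2)

lemma groundE_pos : 0 < groundE := by
  have : (1:ℝ) < 1 + Real.sqrt 2 := by
    nlinarith [Real.sqrt_pos.2 (by norm_num : (0:ℝ) < 2)]
  exact Real.log_pos this

lemma sinh_groundE : Real.sinh groundE = 1 := by
  have h2 : (0:ℝ) < 1 + Real.sqrt 2 := by positivity
  rw [groundE, Real.sinh_log h2]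
  have hs : Real.sqrt 2 ^ 2 = 2 := Real.sq_sqrt (by norm_num)
  have hne : (1 + Real.sqrt 2) ≠ 0 := ne_of_gt h2
  field_simp
  nlinarith [hs]

/-- The log of the quantity of interest. -/
noncomputable def Faux (x : ℝ) : ℝ :=
  Real.log (Real.sinh x) + x * Real.cosh x / Real.sinh x * (Real.log groundE - Real.log x)

lemma hasDerivAt_Faux {x : ℝ} (hx : 0 < x) :
    HasDerivAt Faux
      ((Real.cosh x * Real.sinh x - x) / (Real.sinh x) ^ 2 *
        (Real.log groundE - Real.log x)) x := by
  have hs : Real.sinh x ≠ 0 := (Real.sinh_pos_iff.2 hx).ne'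
  have h1 : HasDerivAt Real.sinh (Real.cosh x) x := Real.hasDerivAt_sinh x
  have hlog : HasDerivAt (fun y => Real.log (Real.sinh y)) (Real.cosh x / Real.sinh x) x :=
    h1.log hs
  have hnum : HasDerivAt (fun y => y * Real.cosh y)
      (1 * Real.cosh x + x * Real.sinh x) x :=
    (hasDerivAt_id x).mul (Real.hasDerivAt_cosh x)
  have hq : HasDerivAt (fun y => y * Real.cosh y / Real.sinh y)
      (((1 * Real.cosh x + x * Real.sinh x) * Real.sinh x -
        x * Real.cosh x * Real.cosh x) / (Real.sinh x) ^ 2) x := hnum.div h1 hs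
  have hA' : HasDerivAt (fun y => Real.log groundE - Real.log y) (-(1 / x)) x := by
    simpa using (Real.hasDerivAt_log hx.ne').const_sub (Real.log groundE)
  have hprod := hq.mul hA'
  have htot := hlog.add hprod
  have hc2 : Real.cosh x ^ 2 = Real.sinh x ^ 2 + 1 := Real.cosh_sq x
  have hkey : (1 * Real.cosh x + x * Real.sinh x) * Real.sinh x - x * Real.cosh x * Real.cosh x
      = Real.cosh x * Real.sinh x - x := by linear_combination (-x) * hc2
  rw [hkey] at htot
  convert htot using 1
  · rfl
  · rfl
  · rfl
  field_simp
  ring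

/-- The factor `(cosh x sinh x - x)/sinh² x` is positive for `x > 0`. -/
lemma gfac_pos {x : ℝ} (hx : 0 < x) :
    0 < (Real.cosh x * Real.sinh x - x) / (Real.sinh x) ^ 2 := by
  have hs : 0 < Real.sinh x := Real.sinh_pos_iff.2 hx
  have h2x : 2 * x < Real.sinh (2 * x) := Real.self_lt_sinh_iff.2 (by linarith)
  rw [Real.sinh_two_mul] at h2x
  have : 0 < Real.cosh x * Real.sinh x - x := by nlinarith
  positivity

lemma Faux_groundE : Faux groundE = 0 := by
  simp [Faux, sinh_groundE]

lemma Faux_nonpos {x : ℝ} (hx : 0 < x) : Faux x ≤ 0 := by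
  have hE := groundE_pos
  -- derivative sign helper
  have hderiv : ∀ y ∈ Set.Ioo (0:ℝ) groundE ∪ Set.Ioi groundE, True := fun _ _ => trivial
  rcases lt_trichotomy x groundE with h | h | h
  · -- F strict mono on [x, groundE]
    have hmono : StrictMonoOn Faux (Set.Icc x groundE) := by
      apply strictMonoOn_of_deriv_pos (convex_Icc x groundE)
      · intro y hy
        exact (hasDerivAt_Faux (lt_of_lt_of_le hx hy.1)).continuousAt.continuousWithinAt
      · intro y hy
        rw [interior_Icc] at hy
        have hy0 : 0 < y := lt_trans hx hy.1
        rw [(hasDerivAt_Faux hy0).deriv]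
        have hfac := gfac_pos hy0
        have hlog : Real.log y < Real.log groundE := Real.log_lt_log hy0 hy.2
        exact mul_pos hfac (by linarith)
    have := hmono (Set.left_mem_Icc.2 h.le) (Set.right_mem_Icc.2 h.le) h
    rw [Faux_groundE] at this; linarith
  · rw [h, Faux_groundE]
  · have hmono : StrictAntiOn Faux (Set.Icc groundE x) := by
      apply strictAntiOn_of_deriv_neg (convex_Icc groundE x)
      · intro y hy
        exact (hasDerivAt_Faux (lt_of_lt_of_le hE hy.1)).continuousAt.continuousWithinAt
      · intro y hy
        rw [interior_Icc] at hy
        have hy0 : 0 < y := lt_trans hE hy.1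
        rw [(hasDerivAt_Faux hy0).deriv]
        have hfac := gfac_pos hy0
        have hlog : Real.log groundE < Real.log y := Real.log_lt_log hE hy.1
        exact mul_neg_of_pos_of_neg hfac (by linarith)
    have := hmono (Set.left_mem_Icc.2 h.le) (Set.right_mem_Icc.2 h.le) h
    rw [Faux_groundE] at this; linarith

/-- For every `x > 0`, `sinh(x) · (E/x)^{x/tanh(x)} ≤ 1` (real power), with equality at
`x = E`: this expresses that the first-moment bound `sinh(x)^n · E^l / x^l` along the relation
`x/tanh(x) = l/n` never exceeds `1` and is saturated at `x = E`. -/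
theorem first_moment_saturation :
    (∀ x : ℝ, 0 < x → Real.sinh x * (groundE / x) ^ (x / Real.tanh x) ≤ 1) ∧
      Real.sinh groundE * (groundE / groundE) ^ (groundE / Real.tanh groundE) = 1 := by
  constructor
  · intro x hx
    have hs : 0 < Real.sinh x := Real.sinh_pos_iff.2 hx
    have hc : 0 < Real.cosh x := Real.cosh_pos x
    have hE := groundE_pos
    have hEx : 0 < groundE / x := div_pos hE hx
    have htanh : x / Real.tanh x = x * Real.cosh x / Real.sinh x := by
      rw [Real.tanh_eq_sinh_div_cosh]
      field_simp
    have hrpow : (groundE / x) ^ (x / Real.tanh x)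
        = Real.exp ((x / Real.tanh x) * Real.log (groundE / x)) := by
      rw [Real.rpow_def_of_pos hEx, mul_comm]
    have hlogdiv : Real.log (groundE / x) = Real.log groundE - Real.log x :=
      Real.log_div hE.ne' hx.ne'
    have hsinh : Real.sinh x = Real.exp (Real.log (Real.sinh x)) :=
      (Real.exp_log hs).symm
    calc Real.sinh x * (groundE / x) ^ (x / Real.tanh x)
        = Real.exp (Faux x) := by
          rw [hrpow, hlogdiv, htanh]
          nth_rewrite 1 [hsinh]
          rw [← Real.exp_add]
          simp only [Faux]
      _ ≤ Real.exp 0 := Real.exp_le_exp.2 (Faux_nonpos hx)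
      _ = 1 := Real.exp_zero
  · rw [div_self groundE_pos.ne', Real.one_rpow, sinh_groundE, mul_one]
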